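/- Let γ > 0 and T the one-dimensional Dunkl operator Tf(x) = f'(x) + γ (f(x) - f(-x))/x. For each y ∈ ℝ, the function x ↦ K(x,y) defined by K(x,y) = (Γ(γ+1/2)/(√π Γ(γ))) ∫_{-1}^{1} e^{t x y}(1-t²)^{γ-1}(1+t) dt satisfies T_x K(x,y) = y K(x,y) and K(0,y) = 1. -/

import Mathlib

/-!
Write `K(x, y) = c_γ Φ(x)` with `Φ(x) = ∫₋₁¹ e^{txy} (1 - t²)^(γ-1) (1 + t) dt`. Differentiating
under the integral sign gives `Φ' = yΦ - yB` with `B(x) = ∫₋₁¹ e^{txy} (1 - t²)^γ dt`, and the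
substitution `t ↦ -t` gives `Φ(x) - Φ(-x) = 2J(x)` with `J(x) = ∫₋₁¹ t e^{txy} (1 - t²)^(γ-1) dt`.
Integrating by parts against `(1 - t²)^γ`, which vanishes at `±1` and has derivative
`-2γt (1 - t²)^(γ-1)`, yields `xyB = 2γJ`: this is the eigenvalue equation for `x ≠ 0`. At `x = 0`
the same integration by parts, with `1 + t` in place of `e^{txy}`, gives `(1 + 2γ) B(0) = 2γ Φ(0)`.
Finally the odd part of `Φ(0)` integrates to `0`, and the substitution `t = 2u - 1` turns
`∫₋₁¹ (1 - t²)^(γ-1) dt` into `2^(2γ-1) Beta(γ, γ)`, which Legendre's duplication formula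
evaluates to `√π Γ(γ) / Γ(γ + 1/2)`.
-/

open Real

/-- The rank-one Dunkl operator with multiplicity `γ`, extended at the origin by
`Tf(0) = (1 + 2γ) f'(0)`. -/
noncomputable def dunklOp1d (γ : ℝ) (f : ℝ → ℝ) (x : ℝ) : ℝ :=
  if x = 0 then (1 + 2 * γ) * deriv f 0
  else deriv f x + γ * (f x - f (-x)) / x

/-- The one-dimensional Dunkl kernel (real arguments), given by its Laplace-type
integral representation. -/
noncomputable def dunklKernel1dReal (γ : ℝ) (x y : ℝ) : ℝ :=
  ∫ t in (-1 : ℝ)..1,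
    Real.Gamma (γ + 1/2) / (Real.sqrt π * Real.Gamma γ) *
      (Real.exp (t * x * y) * ((1 - t ^ 2) ^ (γ - 1) * (1 + t)))

open MeasureTheory Set

lemma intervalIntegrable_one_sub_sq_rpow_mul {c : ℝ} (hc : -1 < c) {φ : ℝ → ℝ}
    (hφ : Continuous φ) :
    IntervalIntegrable (fun t => (1 - t ^ 2) ^ c * φ t) volume (-1) 1 := by
  have on_unit : ∀ ψ : ℝ → ℝ, Continuous ψ →
      IntervalIntegrable (fun t => (1 - t ^ 2) ^ c * ψ t) volume 0 1 := by
    intro ψ hψ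
    have hsing : IntervalIntegrable (fun t : ℝ => (1 - t) ^ c) volume 0 1 := by
      simpa using
        ((intervalIntegral.intervalIntegrable_rpow' (a := 0) (b := 1) hc).comp_sub_left 1).symm
    have hcont : ContinuousOn (fun t : ℝ => (1 + t) ^ c * ψ t) (uIcc 0 1) := by
      refine (ContinuousOn.rpow_const (by fun_prop) fun t ht => ?_).mul hψ.continuousOn
      rw [uIcc_of_le zero_le_one] at ht
      exact Or.inl (by linarith [ht.1])
    refine (hsing.mul_continuousOn hcont).congr fun t ht => ?_
    rw [uIoc_of_le zero_le_one] at ht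
    rw [show 1 - t ^ 2 = (1 - t) * (1 + t) by ring,
      mul_rpow (by linarith [ht.2]) (by linarith [ht.1]), mul_assoc]
  have hleft : IntervalIntegrable (fun t => (1 - t ^ 2) ^ c * φ t) volume (-1) 0 := by
    rw [IntervalIntegrable.iff_comp_neg]
    simpa using (on_unit (fun t => φ (-t)) (by fun_prop)).symm
  exact hleft.trans (on_unit φ hφ)

lemma intervalIntegrable_exp_mul_one_sub_sq_rpow {c : ℝ} (hc : -1 < c) {φ : ℝ → ℝ}
    (hφ : Continuous φ) (x y : ℝ) :
    IntervalIntegrable (fun t => exp (t * x * y) * ((1 - t ^ 2) ^ c * φ t)) volume (-1) 1 :=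
  (intervalIntegrable_one_sub_sq_rpow_mul hc (φ := fun t => exp (t * x * y) * φ t)
    (by fun_prop)).congr fun t _ => by ring

lemma one_sub_sq_rpow_eq_mul {γ t : ℝ} (hγ : γ ≠ 0) (ht : t ∈ Icc (-1) 1) :
    (1 - t ^ 2) ^ γ = (1 - t ^ 2) ^ (γ - 1) * (1 - t ^ 2) := by
  rw [← rpow_add_one' (by nlinarith [ht.1, ht.2]) (by simpa using hγ), sub_add_cancel]

lemma hasDerivAt_integral_exp_mul {g : ℝ → ℝ} (hg : IntervalIntegrable g volume (-1) 1)
    (y x₀ : ℝ) :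
    HasDerivAt (fun x => ∫ t in (-1:ℝ)..1, exp (t * x * y) * g t)
      (∫ t in (-1:ℝ)..1, t * y * (exp (t * x₀ * y) * g t)) x₀ := by
  have hg_meas := (intervalIntegrable_iff.1 hg).aestronglyMeasurable
  have hmeas : ∀ x, AEStronglyMeasurable (fun t => exp (t * x * y) * g t)
      (volume.restrict (uIoc (-1:ℝ) 1)) := fun x =>
    (by fun_prop : Continuous fun t => exp (t * x * y)).aestronglyMeasurable.mul hg_meas
  set M := |y| * exp ((|x₀| + 1) * |y|)
  refine (intervalIntegral.hasDerivAt_integral_of_dominated_loc_of_deriv_le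
    (F' := fun x t => t * y * (exp (t * x * y) * g t)) (bound := fun t => M * ‖g t‖)
    (Metric.ball_mem_nhds x₀ one_pos) (.of_forall hmeas) ?_ ?_ ?_ (hg.norm.const_mul M) ?_).2
  · exact (hg.continuousOn_mul (by fun_prop : Continuous fun t => exp (t * x₀ * y)).continuousOn)
  · exact (by fun_prop : Continuous fun t => t * y).aestronglyMeasurable.mul (hmeas x₀)
  · refine .of_forall fun t ht x hx => ?_
    rw [uIoc_of_le (by norm_num)] at ht
    have ht1 : |t| ≤ 1 := abs_le.2 ⟨ht.1.le, ht.2⟩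
    have hx1 : |x| ≤ |x₀| + 1 := by
      have := abs_sub_abs_le_abs_sub x x₀
      rw [Metric.mem_ball, Real.dist_eq] at hx
      linarith
    have hexp : exp (t * x * y) ≤ exp ((|x₀| + 1) * |y|) := by
      refine exp_le_exp.2 ((le_abs_self _).trans ?_)
      rw [abs_mul, abs_mul]
      calc |t| * |x| * |y| ≤ 1 * (|x₀| + 1) * |y| := by gcongr
        _ = (|x₀| + 1) * |y| := by ring
    rw [norm_mul, norm_mul, norm_mul, Real.norm_eq_abs, Real.norm_eq_abs,
      Real.norm_of_nonneg (exp_pos _).le]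
    calc |t| * |y| * (exp (t * x * y) * ‖g t‖)
        ≤ 1 * |y| * (exp ((|x₀| + 1) * |y|) * ‖g t‖) := by gcongr
      _ = M * ‖g t‖ := by ring
  · refine .of_forall fun t _ x _ => ?_
    have hlin : HasDerivAt (fun x => t * x * y) (t * y) x := by
      simpa using ((hasDerivAt_id x).const_mul t).mul_const y
    exact (hlin.exp.mul_const (g t)).congr_deriv (by ring)

lemma integral_deriv_mul_one_sub_sq_rpow {γ : ℝ} (hγ : 0 < γ) {h h' : ℝ → ℝ}
    (hh : ∀ t, HasDerivAt h (h' t) t) (hh' : Continuous h') :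
    ∫ t in (-1:ℝ)..1, h' t * (1 - t ^ 2) ^ γ
      = 2 * γ * ∫ t in (-1:ℝ)..1, t * h t * (1 - t ^ 2) ^ (γ - 1) := by
  have hh_cont : Continuous h := continuous_iff_continuousAt.2 fun t => (hh t).continuousAt
  have hv : ∀ t ∈ Ioo (min (-1:ℝ) 1) (max (-1) 1), HasDerivAt (fun t => (1 - t ^ 2) ^ γ)
      (-(2 * γ) * (t * (1 - t ^ 2) ^ (γ - 1))) t := by
    intro t ht
    rw [min_eq_left (by norm_num), max_eq_right (by norm_num)] at ht
    have hpos : 0 < 1 - t ^ 2 := by nlinarith [ht.1, ht.2]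
    exact (((hasDerivAt_pow 2 t).const_sub 1).rpow_const (Or.inl hpos.ne')).congr_deriv
      (by push_cast; ring)
  have hv' : IntervalIntegrable (fun t => -(2 * γ) * (t * (1 - t ^ 2) ^ (γ - 1))) volume (-1) 1 :=
    ((intervalIntegrable_one_sub_sq_rpow_mul (c := γ - 1) (by linarith) continuous_id).const_mul
      (-(2 * γ))).congr fun t _ => by simp only [id]; ring
  have hparts := intervalIntegral.integral_mul_deriv_eq_deriv_mul_of_hasDerivAt
    hh_cont.continuousOn (ContinuousOn.rpow_const (by fun_prop) fun _ _ => Or.inr hγ.le)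
    (fun t _ => hh t) hv (hh'.intervalIntegrable _ _) hv'
  norm_num [zero_rpow hγ.ne'] at hparts
  rw [← hparts, ← intervalIntegral.integral_const_mul]
  exact intervalIntegral.integral_congr fun t _ => by ring

lemma integral_rpow_mul_one_sub_rpow {a b : ℝ} (ha : 0 < a) (hb : 0 < b) :
    ∫ u in (0:ℝ)..1, u ^ (a - 1) * (1 - u) ^ (b - 1) = Gamma a * Gamma b / Gamma (a + b) := by
  have hβ : Complex.betaIntegral a b = ↑(∫ u in (0:ℝ)..1, u ^ (a - 1) * (1 - u) ^ (b - 1)) := by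
    rw [Complex.betaIntegral, ← intervalIntegral.integral_ofReal]
    refine intervalIntegral.integral_congr fun u hu => ?_
    rw [uIcc_of_le zero_le_one] at hu
    push_cast [Complex.ofReal_cpow hu.1, Complex.ofReal_cpow (sub_nonneg.2 hu.2)]
    rfl
  have := ProbabilityTheory.beta_eq_betaIntegralReal a b ha hb
  rw [hβ, Complex.ofReal_re] at this
  rw [← this, ProbabilityTheory.beta]

lemma integral_one_sub_sq_rpow_sub_one {γ : ℝ} (hγ : 0 < γ) :
    ∫ t in (-1:ℝ)..1, (1 - t ^ 2) ^ (γ - 1) = √π * Gamma γ / Gamma (γ + 1 / 2) := by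
  have hsubst : ∫ t in (-1:ℝ)..1, (1 - t ^ 2) ^ (γ - 1)
      = 2 * (4 ^ (γ - 1) * ∫ u in (0:ℝ)..1, u ^ (γ - 1) * (1 - u) ^ (γ - 1)) := by
    have h := intervalIntegral.integral_comp_mul_sub (fun t => (1 - t ^ 2) ^ (γ - 1))
      two_ne_zero 1 (a := 0) (b := 1)
    norm_num at h
    rw [show ∫ t in (-1:ℝ)..1, (1 - t ^ 2) ^ (γ - 1)
        = 2 * ∫ u in (0:ℝ)..1, (1 - (2 * u - 1) ^ 2) ^ (γ - 1) by rw [h]; ring]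
    congr 1
    rw [← intervalIntegral.integral_const_mul]
    refine intervalIntegral.integral_congr fun u hu => ?_
    rw [uIcc_of_le zero_le_one] at hu
    rw [show 1 - (2 * u - 1) ^ 2 = 4 * (u * (1 - u)) by ring,
      mul_rpow (by norm_num) (mul_nonneg hu.1 (sub_nonneg.2 hu.2)),
      mul_rpow hu.1 (sub_nonneg.2 hu.2)]
  have hpow : (4 : ℝ) ^ (γ - 1) * 2 ^ (1 - 2 * γ) = 2⁻¹ := by
    rw [show (4 : ℝ) = 2 ^ (2 : ℝ) by norm_num, ← rpow_mul zero_le_two, ← rpow_add two_pos,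
      show 2 * (γ - 1) + (1 - 2 * γ) = -1 by ring, rpow_neg_one]
  have hdup := Gamma_mul_Gamma_add_half γ
  have hG2 : Gamma (2 * γ) ≠ 0 := (Gamma_pos_of_pos (by linarith)).ne'
  have hGh : Gamma (γ + 1 / 2) ≠ 0 := (Gamma_pos_of_pos (by linarith)).ne'
  rw [hsubst, integral_rpow_mul_one_sub_rpow hγ hγ, ← two_mul, eq_div_iff hGh]
  set H := Gamma (γ + 1 / 2)
  field_simp
  linear_combination (2 * 4 ^ (γ - 1)) * hdup + (2 * Gamma (2 * γ) * √π) * hpow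

noncomputable def dunklIntegral (γ y x : ℝ) : ℝ :=
  ∫ t in (-1:ℝ)..1, exp (t * x * y) * ((1 - t ^ 2) ^ (γ - 1) * (1 + t))

lemma dunklKernel1dReal_eq_mul (γ x y : ℝ) :
    dunklKernel1dReal γ x y = Gamma (γ + 1 / 2) / (√π * Gamma γ) * dunklIntegral γ y x :=
  intervalIntegral.integral_const_mul _ _

lemma dunklOp1d_const_mul (γ c : ℝ) (f : ℝ → ℝ) (x : ℝ) :
    dunklOp1d γ (fun x => c * f x) x = c * dunklOp1d γ f x := by
  simp only [dunklOp1d, deriv_const_mul_field']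
  split_ifs <;> ring

lemma dunklIntegral_neg (γ y x : ℝ) :
    dunklIntegral γ y (-x)
      = ∫ t in (-1:ℝ)..1, exp (t * x * y) * ((1 - t ^ 2) ^ (γ - 1) * (1 - t)) := by
  have h := intervalIntegral.integral_comp_neg (a := -1) (b := 1)
    fun t => exp (t * x * y) * ((1 - t ^ 2) ^ (γ - 1) * (1 - t))
  rw [neg_neg] at h
  rw [dunklIntegral, ← h]
  refine intervalIntegral.integral_congr fun t _ => ?_
  simp only [neg_sq, sub_neg_eq_add, neg_mul, mul_neg]

lemma dunklIntegral_sub_dunklIntegral_neg {γ : ℝ} (hγ : 0 < γ) (y x : ℝ) :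
    dunklIntegral γ y x - dunklIntegral γ y (-x)
      = 2 * ∫ t in (-1:ℝ)..1, exp (t * x * y) * ((1 - t ^ 2) ^ (γ - 1) * t) := by
  have hc : -1 < γ - 1 := by linarith
  rw [dunklIntegral_neg, dunklIntegral, ← intervalIntegral.integral_sub
    (intervalIntegrable_exp_mul_one_sub_sq_rpow hc (by fun_prop) x y)
    (intervalIntegrable_exp_mul_one_sub_sq_rpow hc (by fun_prop) x y),
    ← intervalIntegral.integral_const_mul]
  exact intervalIntegral.integral_congr fun t _ => by ring

lemma hasDerivAt_dunklIntegral {γ : ℝ} (hγ : 0 < γ) (y x : ℝ) :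
    HasDerivAt (dunklIntegral γ y)
      (y * dunklIntegral γ y x - y * ∫ t in (-1:ℝ)..1, exp (t * x * y) * (1 - t ^ 2) ^ γ) x := by
  have hc : -1 < γ - 1 := by linarith
  have hB := intervalIntegrable_exp_mul_one_sub_sq_rpow (c := γ) (by linarith)
    (φ := fun _ => 1) continuous_const x y
  simp only [mul_one] at hB
  refine (hasDerivAt_integral_exp_mul (intervalIntegrable_one_sub_sq_rpow_mul hc
    (φ := fun t => 1 + t) (by fun_prop)) y x).congr_deriv ?_
  rw [dunklIntegral, ← intervalIntegral.integral_const_mul, ← intervalIntegral.integral_const_mul,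
    ← intervalIntegral.integral_sub
      ((intervalIntegrable_exp_mul_one_sub_sq_rpow hc (by fun_prop) x y).const_mul y)
      (hB.const_mul y)]
  refine intervalIntegral.integral_congr fun t ht => ?_
  rw [uIcc_of_le (by norm_num)] at ht
  simp only [one_sub_sq_rpow_eq_mul hγ.ne' ht]
  ring

lemma mul_integral_exp_mul_one_sub_sq_rpow {γ : ℝ} (hγ : 0 < γ) (x y : ℝ) :
    x * y * ∫ t in (-1:ℝ)..1, exp (t * x * y) * (1 - t ^ 2) ^ γ
      = 2 * γ * ∫ t in (-1:ℝ)..1, exp (t * x * y) * ((1 - t ^ 2) ^ (γ - 1) * t) := by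
  have hexp : ∀ t, HasDerivAt (fun t => exp (t * x * y)) (x * y * exp (t * x * y)) t := fun t =>
    (((hasDerivAt_id' t).mul_const x).mul_const y).exp.congr_deriv (by ring)
  have h := integral_deriv_mul_one_sub_sq_rpow hγ hexp (by fun_prop)
  rw [← intervalIntegral.integral_const_mul (x * y)]
  convert h using 1
  · exact intervalIntegral.integral_congr fun t _ => by ring
  · congr 1
    exact intervalIntegral.integral_congr fun t _ => by ring

lemma dunklIntegral_zero (γ y : ℝ) :
    dunklIntegral γ y 0 = ∫ t in (-1:ℝ)..1, (1 - t ^ 2) ^ (γ - 1) * (1 + t) := by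
  simp only [dunklIntegral, mul_zero, zero_mul, exp_zero, one_mul]

lemma one_add_two_mul_integral_one_sub_sq_rpow {γ : ℝ} (hγ : 0 < γ) :
    (1 + 2 * γ) * ∫ t in (-1:ℝ)..1, (1 - t ^ 2) ^ γ
      = 2 * γ * ∫ t in (-1:ℝ)..1, (1 - t ^ 2) ^ (γ - 1) * (1 + t) := by
  have hc : -1 < γ - 1 := by linarith
  have hparts := integral_deriv_mul_one_sub_sq_rpow hγ (h := fun t => 1 + t)
    (fun t => (hasDerivAt_id t).const_add 1) continuous_const
  have hsplit : ∫ t in (-1:ℝ)..1, (1 - t ^ 2) ^ γ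
      = (∫ t in (-1:ℝ)..1, (1 - t ^ 2) ^ (γ - 1) * (1 + t))
        - ∫ t in (-1:ℝ)..1, t * (1 + t) * (1 - t ^ 2) ^ (γ - 1) := by
    rw [← intervalIntegral.integral_sub (intervalIntegrable_one_sub_sq_rpow_mul hc (by fun_prop))
      ((intervalIntegrable_one_sub_sq_rpow_mul hc (φ := fun t => t * (1 + t))
        (by fun_prop)).congr fun t _ => mul_comm _ _)]
    refine intervalIntegral.integral_congr fun t ht => ?_
    rw [uIcc_of_le (by norm_num)] at ht
    simp only [one_sub_sq_rpow_eq_mul hγ.ne' ht]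
    ring
  simp only [one_mul] at hparts
  linear_combination (2 * γ) * hsplit + hparts

lemma integral_one_sub_sq_rpow_mul_one_add {γ : ℝ} (hγ : 0 < γ) :
    ∫ t in (-1:ℝ)..1, (1 - t ^ 2) ^ (γ - 1) * (1 + t) = √π * Gamma γ / Gamma (γ + 1 / 2) := by
  have hc : -1 < γ - 1 := by linarith
  have hodd := integral_deriv_mul_one_sub_sq_rpow hγ (h := fun _ => 1)
    (fun t => hasDerivAt_const t 1) continuous_const
  have hodd' : ∫ t in (-1:ℝ)..1, t * 1 * (1 - t ^ 2) ^ (γ - 1) = 0 := by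
    simpa [hγ.ne'] using hodd.symm
  rw [← integral_one_sub_sq_rpow_sub_one hγ, ← sub_eq_zero,
    ← intervalIntegral.integral_sub (intervalIntegrable_one_sub_sq_rpow_mul hc (by fun_prop))
      ((intervalIntegrable_one_sub_sq_rpow_mul hc continuous_const).congr fun t _ => mul_one _),
    ← hodd']
  exact intervalIntegral.integral_congr fun t _ => by ring

lemma dunklOp1d_dunklIntegral {γ : ℝ} (hγ : 0 < γ) (y x : ℝ) :
    dunklOp1d γ (dunklIntegral γ y) x = y * dunklIntegral γ y x := by
  rcases eq_or_ne x 0 with rfl | hx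
  · have h := one_add_two_mul_integral_one_sub_sq_rpow hγ
    rw [dunklOp1d, if_pos rfl, (hasDerivAt_dunklIntegral hγ y 0).deriv]
    simp only [dunklIntegral_zero, mul_zero, zero_mul, exp_zero, one_mul]
    linear_combination (-y) * h
  · rw [dunklOp1d, if_neg hx, (hasDerivAt_dunklIntegral hγ y x).deriv,
      dunklIntegral_sub_dunklIntegral_neg hγ, ← mul_assoc, mul_comm γ 2,
      ← mul_integral_exp_mul_one_sub_sq_rpow hγ, mul_assoc x,
      mul_div_cancel_left₀ _ hx]
    ring

theorem dunkl_kernel_eigenfunction (γ : ℝ) (hγ : 0 < γ) (y : ℝ) :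
    (∀ x : ℝ, dunklOp1d γ (fun x => dunklKernel1dReal γ x y) x
        = y * dunklKernel1dReal γ x y) ∧
      dunklKernel1dReal γ 0 y = 1 := by
  simp only [dunklKernel1dReal_eq_mul]
  refine ⟨fun x => ?_, ?_⟩
  · rw [dunklOp1d_const_mul, dunklOp1d_dunklIntegral hγ]
    ring
  · have hΓ : Gamma (γ + 1 / 2) ≠ 0 := (Gamma_pos_of_pos (by linarith)).ne'
    rw [dunklIntegral_zero, integral_one_sub_sq_rpow_mul_one_add hγ]
    field_simp [(Gamma_pos_of_pos hγ).ne']
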